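/- For any two centrally symmetric convex bodies K, L in the plane, 2·vol(L)·vol(K) − 4·V(K,L)² + vol(K)·∫_{S¹} (h_L²/h_K) dS_K ≤ 0, where V(K,L) is the mixed volume (mixed area) and S_K is the surface area measure of K. -/

import Mathlib

/-!
Blaschke's form of Bonnesen's inequality: if two compact convex sets `A`, `B` in the plane have
the same projection onto a line, then the slice of `A + B` at height `t` contains the sum of the
slices of `A` and `B` at height `t / 2`, so the one-dimensional Brunn–Minkowski inequality,
integrated over `t`, gives `2 |A| + 2 |B| ≤ |A + B|`. For a direction `u` and
`s = h_L(u) / h_K(u)`, the symmetric bodies `s K` and `L` have the same projection onto `ℝ u`;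
expanding `|s K + L|` in mixed areas turns this into
`|K| h_L(u)² - 2 V(K,L) h_K(u) h_L(u) + |L| h_K(u)² ≤ 0`. Dividing by `h_K(u)` and integrating
against `S_K`, with `∫ h_M dS_K = 2 V(K,M)` and `V(K,K) = |K|`, gives the theorem.
-/

open Real Set MeasureTheory
open scoped RealInnerProductSpace Pointwise

/-- The support function of a set `K` at `u`. -/
noncomputable def suppFn (K : Set (EuclideanSpace ℝ (Fin 2)))
    (u : EuclideanSpace ℝ (Fin 2)) : ℝ :=
  sSup ((fun x => ⟪x, u⟫) '' K)

theorem Set.Icc_subset_Icc_add_Icc {a b c d : ℝ} (hab : a ≤ b) (hcd : c ≤ d) :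
    Icc (a + c) (b + d) ⊆ Icc a b + Icc c d := by
  rintro x ⟨hxl, hxu⟩
  by_cases hx : x ≤ a + d
  · exact ⟨a, left_mem_Icc.2 hab, x - a, ⟨by linarith, by linarith⟩, by ring⟩
  · exact ⟨x - d, ⟨by linarith, by linarith⟩, d, right_mem_Icc.2 hcd, by ring⟩

theorem Convex.exists_eq_Icc {X : Set ℝ} (hXv : Convex ℝ X) (hXc : IsCompact X)
    (hXn : X.Nonempty) : ∃ a b, a ≤ b ∧ X = Icc a b :=
  ⟨_, _, csInf_le_csSup hXn hXc.bddBelow hXc.bddAbove,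
    eq_Icc_of_connected_compact (hXv.isConnected hXn) hXc⟩

theorem Real.volume_add_volume_le_volume_add {X Y : Set ℝ}
    (hXc : IsCompact X) (hXv : Convex ℝ X) (hXn : X.Nonempty)
    (hYc : IsCompact Y) (hYv : Convex ℝ Y) (hYn : Y.Nonempty) :
    volume X + volume Y ≤ volume (X + Y) := by
  obtain ⟨a, b, hab, rfl⟩ := hXv.exists_eq_Icc hXc hXn
  obtain ⟨c, d, hcd, rfl⟩ := hYv.exists_eq_Icc hYc hYn
  calc volume (Icc a b) + volume (Icc c d) = volume (Icc (a + c) (b + d)) := by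
        simp only [Real.volume_Icc, ← ENNReal.ofReal_add (sub_nonneg.2 hab) (sub_nonneg.2 hcd)]
        ring_nf
    _ ≤ volume (Icc a b + Icc c d) := measure_mono (Icc_subset_Icc_add_Icc hab hcd)

theorem IsCompact.preimage_prodMk {α β : Type*} [TopologicalSpace α] [TopologicalSpace β]
    [T2Space α] [T2Space β] {C : Set (α × β)} (hC : IsCompact C) (x : α) :
    IsCompact (Prod.mk x ⁻¹' C) :=
  (hC.image continuous_snd).of_isClosed_subset (hC.isClosed.preimage (Continuous.prodMk_right x))
    fun _ hy => ⟨_, hy, rfl⟩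

theorem Convex.preimage_prodMk {𝕜 E F : Type*} [Semiring 𝕜] [PartialOrder 𝕜] [AddCommMonoid E]
    [Module 𝕜 E] [AddCommMonoid F] [Module 𝕜 F] {C : Set (E × F)} (hC : Convex 𝕜 C) (x : E) :
    Convex 𝕜 (Prod.mk x ⁻¹' C) := by
  intro y₁ h₁ y₂ h₂ a b ha hb hab
  simpa [← add_smul, hab] using hC h₁ h₂ ha hb hab

theorem Real.lintegral_comp_div (f : ℝ → ENNReal) {c : ℝ} (hc : c ≠ 0) :
    ∫⁻ t, f (t / c) = ENNReal.ofReal |c| * ∫⁻ x, f x := by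
  have := lintegral_map_equiv f (MeasurableEquiv.mulLeft₀ c⁻¹ (inv_ne_zero hc)) (μ := volume)
  simp only [MeasurableEquiv.coe_mulLeft₀] at this
  rw [Real.map_volume_mul_left (inv_ne_zero hc), lintegral_smul_measure, inv_inv] at this
  simp_rw [div_eq_inv_mul]
  exact this.symm

theorem two_mul_volume_add_two_mul_volume_le_volume_add_of_image_fst_eq {A B : Set (ℝ × ℝ)}
    (hAc : IsCompact A) (hAv : Convex ℝ A) (hBc : IsCompact B) (hBv : Convex ℝ B)
    (hAB : Prod.fst '' A = Prod.fst '' B) :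
    2 * volume A + 2 * volume B ≤ volume (A + B) := by
  have volume_eq : ∀ {C : Set (ℝ × ℝ)}, IsCompact C → volume C = ∫⁻ x, volume (Prod.mk x ⁻¹' C) :=
    fun hC => by rw [Measure.volume_eq_prod, Measure.prod_apply hC.isClosed.measurableSet]
  have slice_nonempty : ∀ (C : Set (ℝ × ℝ)) x, (Prod.mk x ⁻¹' C).Nonempty ↔ x ∈ Prod.fst '' C :=
    fun C x => ⟨fun ⟨_, hy⟩ => ⟨_, hy, rfl⟩, fun ⟨p, hp, hpx⟩ => ⟨p.2, by simpa [← hpx] using hp⟩⟩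
  have slice_add : ∀ t, Prod.mk (t / 2) ⁻¹' A + Prod.mk (t / 2) ⁻¹' B ⊆ Prod.mk t ⁻¹' (A + B) := by
    rintro t _ ⟨_, hy, _, hz, rfl⟩
    exact ⟨_, hy, _, hz, by simp⟩
  have slice_le : ∀ t, volume (Prod.mk (t / 2) ⁻¹' A) + volume (Prod.mk (t / 2) ⁻¹' B)
      ≤ volume (Prod.mk t ⁻¹' (A + B)) := by
    intro t
    by_cases ht : t / 2 ∈ Prod.fst '' A
    · have hA := (slice_nonempty A _).2 ht
      have hB := (slice_nonempty B _).2 (hAB ▸ ht)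
      exact (Real.volume_add_volume_le_volume_add (hAc.preimage_prodMk _) (hAv.preimage_prodMk _)
        hA (hBc.preimage_prodMk _) (hBv.preimage_prodMk _) hB).trans (measure_mono (slice_add t))
    · have hA := not_nonempty_iff_eq_empty.1 (mt (slice_nonempty A _).1 ht)
      have hB := not_nonempty_iff_eq_empty.1 (mt (slice_nonempty B _).1 (hAB ▸ ht))
      simp [hA, hB]
  calc 2 * volume A + 2 * volume B
      = (∫⁻ t, volume (Prod.mk (t / 2) ⁻¹' A)) + ∫⁻ t, volume (Prod.mk (t / 2) ⁻¹' B) := by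
        rw [Real.lintegral_comp_div (fun x => volume (Prod.mk x ⁻¹' A)) two_ne_zero,
          Real.lintegral_comp_div (fun x => volume (Prod.mk x ⁻¹' B)) two_ne_zero,
          volume_eq hAc, volume_eq hBc]
        norm_num
    _ ≤ ∫⁻ t, volume (Prod.mk (t / 2) ⁻¹' A) + volume (Prod.mk (t / 2) ⁻¹' B) :=
        le_lintegral_add _ _
    _ ≤ ∫⁻ t, volume (Prod.mk t ⁻¹' (A + B)) := lintegral_mono slice_le
    _ = volume (A + B) := (volume_eq (hAc.add hBc)).symm

theorem two_mul_volume_add_two_mul_volume_le_volume_add_of_image_inner_eq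
    {F : Type*} [NormedAddCommGroup F] [InnerProductSpace ℝ F] [FiniteDimensional ℝ F]
    [MeasurableSpace F] [BorelSpace F] (hF : Module.finrank ℝ F = 2)
    {A B : Set F} (hAc : IsCompact A) (hAv : Convex ℝ A) (hBc : IsCompact B) (hBv : Convex ℝ B)
    {v : F} (hv : v ≠ 0) (hAB : innerSL ℝ v '' A = innerSL ℝ v '' B) :
    2 * volume A + 2 * volume B ≤ volume (A + B) := by
  set w := ‖v‖⁻¹ • v
  have hw : ‖w‖ = 1 := norm_smul_inv_norm hv
  have image_w : ∀ C : Set F, innerSL ℝ w '' C = (‖v‖⁻¹ * ·) '' (innerSL ℝ v '' C) := by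
    intro C
    rw [image_image]
    simp [w]
  have horth : Orthonormal ℝ (({0} : Set (Fin 2)).domRestrict fun _ => w) :=
    orthonormal_subsingleton_iff.2 fun _ => hw
  obtain ⟨b, hb⟩ := horth.exists_orthonormalBasis_extension_of_card_eq (by simp [hF])
  set φ : (ℝ × ℝ) ≃L[ℝ] F := ((ContinuousLinearEquiv.finTwoArrow ℝ ℝ).symm.trans
    (EuclideanSpace.equiv (Fin 2) ℝ).symm).trans b.repr.symm.toContinuousLinearEquiv
  have hφ : MeasurePreserving φ := b.measurePreserving_repr_symm.comp
    ((PiLp.volume_preserving_toLp _).comp (volume_preserving_finTwoArrow ℝ).symm)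
  have image_fst : ∀ C : Set F, Prod.fst '' (φ ⁻¹' C) = innerSL ℝ w '' C := by
    intro C
    rw [← φ.image_symm_eq_preimage, image_image]
    congr! with x
    simp [φ, b.repr_apply_apply, hb 0 rfl]
  have volume_preimage : ∀ {C : Set F}, IsCompact C → volume (φ ⁻¹' C) = volume C :=
    fun hC => hφ.measure_preimage hC.isClosed.measurableSet.nullMeasurableSet
  calc 2 * volume A + 2 * volume B = 2 * volume (φ ⁻¹' A) + 2 * volume (φ ⁻¹' B) := by
        rw [volume_preimage hAc, volume_preimage hBc]
    _ ≤ volume (φ ⁻¹' A + φ ⁻¹' B) :=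
        two_mul_volume_add_two_mul_volume_le_volume_add_of_image_fst_eq
          (φ.toHomeomorph.isCompact_preimage.2 hAc) (hAv.linear_preimage φ.toLinearMap)
          (φ.toHomeomorph.isCompact_preimage.2 hBc) (hBv.linear_preimage φ.toLinearMap)
          (by rw [image_fst, image_fst, image_w, image_w, hAB])
    _ ≤ volume (φ ⁻¹' (A + B)) := measure_mono (preimage_add_preimage_subset φ)
    _ = volume (A + B) := volume_preimage (hAc.add hBc)

section SupportFunction

local notation "ℝ²" => EuclideanSpace ℝ (Fin 2)

variable {K : Set ℝ²} {u : ℝ²}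

theorem suppFn_eq_sSup_image_innerSL (K : Set ℝ²) (u : ℝ²) :
    suppFn K u = sSup (innerSL ℝ u '' K) := by
  simp only [suppFn, real_inner_comm u]
  rfl

theorem suppFn_smul_set {c : ℝ} (hc : 0 ≤ c) (K : Set ℝ²) (u : ℝ²) :
    suppFn (c • K) u = c * suppFn K u := by
  rw [suppFn_eq_sSup_image_innerSL, suppFn_eq_sSup_image_innerSL, image_smul_set,
    Real.sSup_smul_of_nonneg hc, smul_eq_mul]

theorem suppFn_zero_right (K : Set ℝ²) : suppFn K 0 = 0 := by
  rcases K.eq_empty_or_nonempty with rfl | hK <;> simp [suppFn, *]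

theorem le_suppFn (hKc : IsCompact K) {x : ℝ²} (hx : x ∈ K) : ⟪x, u⟫ ≤ suppFn K u :=
  le_csSup ((hKc.image (continuous_id.inner continuous_const)).bddAbove) ⟨x, hx, rfl⟩

theorem suppFn_nonneg (hKc : IsCompact K) (hK0 : (0 : ℝ²) ∈ K) (u : ℝ²) : 0 ≤ suppFn K u := by
  simpa using le_suppFn (u := u) hKc hK0

theorem suppFn_pos (hKc : IsCompact K) (hK0 : (0 : ℝ²) ∈ interior K) (hu : u ≠ 0) :
    0 < suppFn K u := by
  have hsmul : ∀ᶠ t : ℝ in nhdsWithin 0 (Ioi 0), t • u ∈ K :=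
    tendsto_nhdsWithin_of_tendsto_nhds ((continuous_id.smul continuous_const).tendsto' 0 0
      (zero_smul ℝ u)) |>.eventually (mem_interior_iff_mem_nhds.1 hK0)
  obtain ⟨t, htK, ht⟩ := (hsmul.and self_mem_nhdsWithin).exists
  calc 0 < t * ‖u‖ ^ 2 := mul_pos ht (by positivity)
    _ = ⟪t • u, u⟫ := by rw [real_inner_smul_left, real_inner_self_eq_norm_sq]
    _ ≤ suppFn K u := le_suppFn hKc htK

theorem image_innerSL_eq_Icc_suppFn (hKc : IsCompact K) (hKv : Convex ℝ K) (hKn : K.Nonempty)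
    (hKs : K = -K) (u : ℝ²) : innerSL ℝ u '' K = Icc (-suppFn K u) (suppFn K u) := by
  have hneg : -(innerSL ℝ u '' K) = innerSL ℝ u '' K := by rw [← image_neg, ← hKs]
  have hIcc : innerSL ℝ u '' K = Icc (sInf (innerSL ℝ u '' K)) (sSup (innerSL ℝ u '' K)) :=
    eq_Icc_of_connected_compact ((hKv.linear_image (innerSL ℝ u).toLinearMap).isConnected
      (hKn.image _)) (hKc.image (innerSL ℝ u).continuous)
  rwa [Real.sInf_def, hneg, ← suppFn_eq_sSup_image_innerSL] at hIcc

end SupportFunction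

section MixedArea

local notation "ℝ²" => EuclideanSpace ℝ (Fin 2)

theorem toReal_volume_smul {c : ℝ} (hc : 0 ≤ c) (C : Set ℝ²) :
    (volume (c • C)).toReal = c ^ 2 * (volume C).toReal := by
  rw [Measure.addHaar_smul_of_nonneg _ hc, finrank_euclideanSpace_fin, ENNReal.toReal_mul,
    ENNReal.toReal_ofReal (by positivity)]

theorem toReal_volume_pos {K : Set ℝ²} (hKc : IsCompact K) (hK0 : (0 : ℝ²) ∈ interior K) :
    0 < (volume K).toReal :=
  ENNReal.toReal_pos (Measure.measure_pos_of_nonempty_interior _ ⟨0, hK0⟩).ne'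
    hKc.measure_lt_top.ne

theorem eq_toReal_volume_of_volume_add_smul_self {K : Set ℝ²} (hKv : Convex ℝ K) {V : ℝ}
    (hV : ∀ t : ℝ, 0 ≤ t →
      (volume (K + t • K)).toReal = (volume K).toReal + 2 * t * V + t ^ 2 * (volume K).toReal) :
    V = (volume K).toReal := by
  have hKK : K + (1 : ℝ) • K = (2 : ℝ) • K := by
    simpa [one_add_one_eq_two] using (hKv.add_smul (zero_le_one' ℝ) zero_le_one).symm
  have := hV 1 zero_le_one
  rw [hKK, toReal_volume_smul zero_le_two] at this
  linarith

theorem mixedArea_quadratic_suppFn_nonpos {K L : Set ℝ²}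
    (hKc : IsCompact K) (hKv : Convex ℝ K) (hK0 : (0 : ℝ²) ∈ interior K) (hKs : K = -K)
    (hLc : IsCompact L) (hLv : Convex ℝ L) (hL0 : (0 : ℝ²) ∈ interior L) (hLs : L = -L) {V : ℝ}
    (hV : ∀ t : ℝ, 0 ≤ t →
      (volume (K + t • L)).toReal = (volume K).toReal + 2 * t * V + t ^ 2 * (volume L).toReal)
    {u : ℝ²} (hu : u ≠ 0) :
    (volume K).toReal * suppFn L u ^ 2 - 2 * V * suppFn K u * suppFn L u
      + (volume L).toReal * suppFn K u ^ 2 ≤ 0 := by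
  have hKu := suppFn_pos hKc hK0 hu
  set s := suppFn L u / suppFn K u
  have hs : 0 < s := div_pos (suppFn_pos hLc hL0 hu) hKu
  have hsK : suppFn (s • K) u = suppFn L u := by
    rw [suppFn_smul_set hs.le, div_mul_cancel₀ _ hKu.ne']
  have hwidth : innerSL ℝ u '' (s • K) = innerSL ℝ u '' L := by
    rw [image_innerSL_eq_Icc_suppFn (hKc.smul s) (hKv.smul s)
      (nonempty_of_mem (interior_subset hK0)).smul_set (by rw [← smul_set_neg, ← hKs]),
      image_innerSL_eq_Icc_suppFn hLc hLv (nonempty_of_mem (interior_subset hL0)) hLs, hsK]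
  have hB := two_mul_volume_add_two_mul_volume_le_volume_add_of_image_inner_eq
    finrank_euclideanSpace_fin (hKc.smul s) (hKv.smul s) hLc hLv hu hwidth
  have hBreal := ENNReal.toReal_mono ((hKc.smul s).add hLc).measure_lt_top.ne hB
  rw [ENNReal.toReal_add (ENNReal.mul_ne_top (by simp) (hKc.smul s).measure_lt_top.ne)
      (ENNReal.mul_ne_top (by simp) hLc.measure_lt_top.ne), ENNReal.toReal_mul, ENNReal.toReal_mul,
    ENNReal.toReal_ofNat, show s • K + L = s • (K + s⁻¹ • L) by
      rw [smul_add, smul_smul, mul_inv_cancel₀ hs.ne', one_smul],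
    toReal_volume_smul hs.le, toReal_volume_smul hs.le, hV _ (inv_nonneg.2 hs.le)] at hBreal
  have hquad : s ^ 2 * (volume K).toReal - 2 * s * V + (volume L).toReal ≤ 0 := by
    have : s ^ 2 * ((volume K).toReal + 2 * s⁻¹ * V + s⁻¹ ^ 2 * (volume L).toReal)
        = s ^ 2 * (volume K).toReal + 2 * s * V + (volume L).toReal := by
      field_simp
    linarith
  have hhom : suppFn K u ^ 2 * (s ^ 2 * (volume K).toReal - 2 * s * V + (volume L).toReal)
      = (volume K).toReal * suppFn L u ^ 2 - 2 * V * suppFn K u * suppFn L u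
        + (volume L).toReal * suppFn K u ^ 2 := by
    simp only [s]
    field_simp
  rw [← hhom]
  exact mul_nonpos_of_nonneg_of_nonpos (sq_nonneg _) hquad

theorem mixedArea_pos {K L : Set ℝ²}
    (hKc : IsCompact K) (hKv : Convex ℝ K) (hK0 : (0 : ℝ²) ∈ interior K) (hKs : K = -K)
    (hLc : IsCompact L) (hLv : Convex ℝ L) (hL0 : (0 : ℝ²) ∈ interior L) (hLs : L = -L) {V : ℝ}
    (hV : ∀ t : ℝ, 0 ≤ t →
      (volume (K + t • L)).toReal = (volume K).toReal + 2 * t * V + t ^ 2 * (volume L).toReal) :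
    0 < V := by
  obtain ⟨u, hu⟩ := exists_ne (0 : ℝ²)
  have hKu := suppFn_pos hKc hK0 hu
  have hLu := suppFn_pos hLc hL0 hu
  have : 0 < (volume K).toReal * suppFn L u ^ 2 + (volume L).toReal * suppFn K u ^ 2 :=
    add_pos_of_pos_of_nonneg (mul_pos (toReal_volume_pos hKc hK0) (by positivity))
      (mul_nonneg ENNReal.toReal_nonneg (sq_nonneg _))
  nlinarith [mixedArea_quadratic_suppFn_nonpos hKc hKv hK0 hKs hLc hLv hL0 hLs hV hu,
    mul_pos hKu hLu]

theorem toReal_volume_mul_sq_suppFn_div_le {K L : Set ℝ²}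
    (hKc : IsCompact K) (hKv : Convex ℝ K) (hK0 : (0 : ℝ²) ∈ interior K) (hKs : K = -K)
    (hLc : IsCompact L) (hLv : Convex ℝ L) (hL0 : (0 : ℝ²) ∈ interior L) (hLs : L = -L) {V : ℝ}
    (hV : ∀ t : ℝ, 0 ≤ t →
      (volume (K + t • L)).toReal = (volume K).toReal + 2 * t * V + t ^ 2 * (volume L).toReal)
    (u : ℝ²) :
    (volume K).toReal * (suppFn L u ^ 2 / suppFn K u)
      ≤ 2 * V * suppFn L u - (volume L).toReal * suppFn K u := by
  rcases eq_or_ne u 0 with rfl | hu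
  · simp [suppFn_zero_right]
  · have hKu := suppFn_pos hKc hK0 hu
    rw [mul_div_assoc', div_le_iff₀ hKu]
    nlinarith [mixedArea_quadratic_suppFn_nonpos hKc hKv hK0 hKs hLc hLv hL0 hLs hV hu]

end MixedArea

/-- the local log-Brunn-Minkowski inequality in the plane.  Here `MV M`
is the mixed area `V(M, K)`, characterized by `vol(K + tM) = vol K + 2t·V(M,K) + t²·vol M`,
and `S` is the surface area measure of `K` on the unit circle, characterized by
`∫ h_M dS = 2 V(M, K)` for all convex bodies `M`. -/
theorem local_logBM_plane (K L : Set (EuclideanSpace ℝ (Fin 2)))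
    (hKc : IsCompact K) (hKv : Convex ℝ K)
    (hK0 : (0 : EuclideanSpace ℝ (Fin 2)) ∈ interior K) (hKs : K = -K)
    (hLc : IsCompact L) (hLv : Convex ℝ L)
    (hL0 : (0 : EuclideanSpace ℝ (Fin 2)) ∈ interior L) (hLs : L = -L)
    (MV : Set (EuclideanSpace ℝ (Fin 2)) → ℝ)
    (hMV : ∀ M : Set (EuclideanSpace ℝ (Fin 2)), IsCompact M → Convex ℝ M →
      (0 : EuclideanSpace ℝ (Fin 2)) ∈ interior M → ∀ t : ℝ, 0 ≤ t →
      (volume (K + t • M)).toReal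
        = (volume K).toReal + 2 * t * MV M + t ^ 2 * (volume M).toReal)
    (S : Measure (EuclideanSpace ℝ (Fin 2)))
    (hS : ∀ M : Set (EuclideanSpace ℝ (Fin 2)), IsCompact M → Convex ℝ M →
      (0 : EuclideanSpace ℝ (Fin 2)) ∈ interior M →
      ∫ x, suppFn M x ∂S = 2 * MV M) :
    2 * (volume L).toReal * (volume K).toReal - 4 * (MV L) ^ 2
      + (volume K).toReal * ∫ x, (suppFn L x) ^ 2 / suppFn K x ∂S ≤ 0 := by
  set vK := (volume K).toReal
  set vL := (volume L).toReal
  have hMVK : MV K = vK := eq_toReal_volume_of_volume_add_smul_self hKv (hMV K hKc hKv hK0)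
  have hMVL : 0 < MV L := mixedArea_pos hKc hKv hK0 hKs hLc hLv hL0 hLs (hMV L hLc hLv hL0)
  -- a non-integrable function has integral `0`, so `hS` forces integrability once `MV M ≠ 0`
  have hintK : Integrable (suppFn K) S := .of_integral_ne_zero (by
    rw [hS K hKc hKv hK0, hMVK]; exact mul_ne_zero two_ne_zero (toReal_volume_pos hKc hK0).ne')
  have hintL : Integrable (suppFn L) S :=
    .of_integral_ne_zero (by rw [hS L hLc hLv hL0]; positivity)
  have hpoint := toReal_volume_mul_sq_suppFn_div_le hKc hKv hK0 hKs hLc hLv hL0 hLs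
    (hMV L hLc hLv hL0)
  have hint : vK * ∫ x, suppFn L x ^ 2 / suppFn K x ∂S ≤ 2 * MV L * (2 * MV L) - vL * (2 * vK) :=
    calc vK * ∫ x, suppFn L x ^ 2 / suppFn K x ∂S
        = ∫ x, vK * (suppFn L x ^ 2 / suppFn K x) ∂S := (integral_const_mul _ _).symm
      _ ≤ ∫ x, (2 * MV L * suppFn L x - vL * suppFn K x) ∂S :=
        integral_mono_of_nonneg (ae_of_all _ fun x => mul_nonneg ENNReal.toReal_nonneg
          (div_nonneg (sq_nonneg _) (suppFn_nonneg hKc (interior_subset hK0) x)))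
          ((hintL.const_mul _).sub (hintK.const_mul _)) (ae_of_all _ hpoint)
      _ = 2 * MV L * (2 * MV L) - vL * (2 * vK) := by
        rw [integral_sub (hintL.const_mul _) (hintK.const_mul _), integral_const_mul,
          integral_const_mul, hS L hLc hLv hL0, hS K hKc hKv hK0, hMVK]
  linarith
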